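/- arXiv:2007.10034 — 4 statements merged into one kernel-verified Lean document; each statement's English description precedes it below -/
import Mathlib

section
/- Let G be a group in which every cyclic subgroup is separable (this holds, in particular, whenever G is subgroup separable, i.e. every finitely generated subgroup of G is separable). Then G is balanced: for every element h of G of infinite order, every g in G, and all integers p and q, the relation g·h^p·g⁻¹ = h^q implies |p| = |q|. -/
/-- A subgroup `H` of `G` is separable if for every `g ∉ H` there is a homomorphism
`φ` from `G` to a finite group with `φ g ∉ φ(H)`. -/
def IsSeparableSubgroup {G : Type*} [Group G] (H : Subgroup G) : Prop :=
  ∀ g : G, g ∉ H → ∃ (Q : Type) (_ : Group Q) (_ : Finite Q) (φ : G →* Q),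
    φ g ∉ H.map φ

/-!
If `g h^p g⁻¹ = h^q` with `|q| < |p|` and `h` of infinite order, then `h^q ∉ ⟨h^p⟩`, since the
powers of `h^p` are the `h^(pk)`. In a finite quotient separating `h^q` from `⟨h^p⟩`, however,
the images of `h^p` and `h^q` are conjugate, so they have the same order; being powers of a
single element `a` of finite order `n`, both then generate the unique subgroup of that order in
`⟨a⟩`, so the image of `h^q` lies in that of `⟨h^p⟩` after all.
-/

open Subgroup

section OrderOfZPow

variable {G : Type*} [Group G]

theorem IsOfFinOrder.orderOf_zpow {x : G} (hx : IsOfFinOrder x) (k : ℤ) :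
    orderOf (x ^ k) = orderOf x / k.gcd (orderOf x) := by
  rcases Int.natAbs_eq k with hk | hk <;> rw [hk]
  · rw [zpow_natCast, hx.orderOf_pow, Int.gcd_natCast_natCast, Nat.gcd_comm]
  · rw [zpow_neg, zpow_natCast, orderOf_inv, hx.orderOf_pow, Int.neg_gcd, Int.gcd_natCast_natCast,
      Nat.gcd_comm]

theorem zpow_mem_zpowers_zpow_iff {x : G} {j k : ℤ} :
    x ^ j ∈ zpowers (x ^ k) ↔ (k.gcd (orderOf x) : ℤ) ∣ j := by
  rw [Int.coe_gcd, gcd_dvd_iff_exists, mem_zpowers_iff]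
  simp_rw [← zpow_mul, zpow_eq_zpow_iff_modEq, Int.modEq_iff_dvd, dvd_def, sub_eq_iff_eq_add']

theorem zpow_mem_zpowers_zpow_of_orderOf_eq {x : G} (hx : IsOfFinOrder x) {j k : ℤ}
    (h : orderOf (x ^ k) = orderOf (x ^ j)) : x ^ j ∈ zpowers (x ^ k) := by
  rw [hx.orderOf_zpow, hx.orderOf_zpow] at h
  have hn := hx.orderOf_pos.ne'
  have hdvd (i : ℤ) : i.gcd (orderOf x) ∣ orderOf x := Nat.gcd_dvd_right _ _
  have hgcd : k.gcd (orderOf x) = j.gcd (orderOf x) :=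
    calc k.gcd (orderOf x) = orderOf x / (orderOf x / k.gcd (orderOf x)) :=
          (Nat.div_div_self (hdvd k) hn).symm
      _ = j.gcd (orderOf x) := by rw [h, Nat.div_div_self (hdvd j) hn]
  rw [zpow_mem_zpowers_zpow_iff, hgcd]
  exact Int.gcd_dvd_left _ _

end OrderOfZPow

theorem abs_le_abs_of_semiconjBy_zpow {G : Type*} [Group G] {g h : G} (hinf : ¬IsOfFinOrder h)
    {p q : ℤ} (hsep : IsSeparableSubgroup (zpowers (h ^ p))) (hrel : SemiconjBy g (h ^ p) (h ^ q)) :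
    |p| ≤ |q| := by
  have hzpow_inj := injective_zpow_iff_not_isOfFinOrder.mpr hinf
  rcases eq_or_ne q 0 with rfl | hq
  · have hp : h ^ p = h ^ (0 : ℤ) := by simpa [SemiconjBy] using hrel
    simp [hzpow_inj hp]
  by_contra! hlt
  have hnot : h ^ q ∉ zpowers (h ^ p) := by
    rw [zpow_mem_zpowers_zpow_iff, orderOf_eq_zero_iff.mpr hinf, Nat.cast_zero, Int.gcd_zero_right,
      Int.natCast_natAbs]
    exact fun hdvd ↦ hlt.not_ge (Int.le_of_dvd (abs_pos.mpr hq) ((dvd_abs _ _).mpr hdvd))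
  obtain ⟨Q, _, _, φ, hφ⟩ := hsep (h ^ q) hnot
  rw [MonoidHom.map_zpowers, map_zpow, map_zpow] at hφ
  have hrelQ := hrel.map φ
  rw [map_zpow, map_zpow] at hrelQ
  exact hφ (zpow_mem_zpowers_zpow_of_orderOf_eq (isOfFinOrder_of_finite _) hrelQ.orderOf_eq)

/-- If every cyclic subgroup of `G` is separable, then `G` is balanced:
`g * h^p * g⁻¹ = h^q` for `h` of infinite order implies `|p| = |q|`. -/
theorem balanced_of_cyclic_subgroups_separable {G : Type*} [Group G]
    (hsep : ∀ h : G, IsSeparableSubgroup (Subgroup.zpowers h))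
    (h g : G) (hinf : ∀ n : ℕ, 0 < n → h ^ n ≠ 1)
    (p q : ℤ) (hrel : g * h ^ p * g⁻¹ = h ^ q) :
    |p| = |q| := by
  have hinf' : ¬IsOfFinOrder h := by
    simpa [isOfFinOrder_iff_pow_eq_one] using hinf
  have hconj : SemiconjBy g (h ^ p) (h ^ q) := hrel ▸ SemiconjBy.conj_mk g (h ^ p)
  exact le_antisymm (abs_le_abs_of_semiconjBy_zpow hinf' (hsep _) hconj)
    (abs_le_abs_of_semiconjBy_zpow hinf' (hsep _) hconj.inv_symm_left)
end

section
/- Let G be a group, let h be an element of G of infinite order, and let N be a positive integer such that the cyclic subgroup generated by h^N is separable in G. Then there exists a homomorphism ρ from G to a finite group such that the order of ρ(h) is a positive multiple of N. -/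
theorem IsSeparableSubgroup.exists_finite_quotient_forall_notMem {G : Type*} [Group G]
    {H : Subgroup G} (hH : IsSeparableSubgroup H) {ι : Type} [Finite ι] (g : ι → G)
    (hg : ∀ i, g i ∉ H) :
    ∃ (Q : Type) (_ : Group Q) (_ : Finite Q) (φ : G →* Q), ∀ i, φ (g i) ∉ H.map φ := by
  choose Q instGroup instFinite φ hφ using fun i => hH (g i) (hg i)
  refine ⟨∀ i, Q i, inferInstance, inferInstance, MonoidHom.pi φ, fun i hi => hφ i ?_⟩
  have := Subgroup.mem_map_of_mem (Pi.evalMonoidHom Q i) hi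
  rwa [Subgroup.map_map] at this

theorem dvd_of_pow_mem_zpowers_pow {G : Type*} [Group G] {h : G} (hh : ¬IsOfFinOrder h)
    {i N : ℕ} (hi : h ^ i ∈ Subgroup.zpowers (h ^ N)) : N ∣ i := by
  obtain ⟨k, hk : (h ^ N) ^ k = h ^ i⟩ := hi
  rw [← zpow_natCast, ← zpow_mul, ← zpow_natCast] at hk
  exact Int.natCast_dvd_natCast.mp ⟨k, (injective_zpow_iff_not_isOfFinOrder.mpr hh hk).symm⟩

theorem dvd_orderOf_of_forall_pow_notMem_zpowers_pow {G : Type*} [Group G] {x : G} {N : ℕ}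
    (hN : 0 < N) (hx : ∀ i, 0 < i → i < N → x ^ i ∉ Subgroup.zpowers (x ^ N)) :
    N ∣ orderOf x := by
  refine Nat.dvd_of_mod_eq_zero (Nat.eq_zero_of_not_pos fun hr => hx _ hr (Nat.mod_lt _ hN) ?_)
  have hmul : x ^ (orderOf x % N) * (x ^ N) ^ (orderOf x / N) = 1 := by
    rw [← pow_mul, ← pow_add, Nat.mod_add_div, pow_orderOf_eq_one]
  rw [eq_inv_of_mul_eq_one_left hmul]
  exact Subgroup.inv_mem _ (Subgroup.pow_mem _ (Subgroup.mem_zpowers _) _)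

/-- If `h` has infinite order and the cyclic subgroup `⟨h^N⟩` is separable in `G`
(`N > 0`), then there is a homomorphism `ρ` from `G` to a finite group such that
the order of `ρ h` is a positive multiple of `N`. -/
theorem exists_finite_quotient_order_isMultiple {G : Type*} [Group G]
    (h : G) (hinf : ∀ n : ℕ, 0 < n → h ^ n ≠ 1)
    (N : ℕ) (hN : 0 < N)
    (hsep : IsSeparableSubgroup (Subgroup.zpowers (h ^ N))) :
    ∃ (Q : Type) (_ : Group Q) (_ : Finite Q) (ρ : G →* Q) (k : ℕ),
      0 < k ∧ orderOf (ρ h) = k * N := by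
  have hh : ¬IsOfFinOrder h := fun hfin =>
    let ⟨n, hn, hn1⟩ := isOfFinOrder_iff_pow_eq_one.mp hfin
    hinf n hn hn1
  obtain ⟨Q, _, _, ρ, hρ⟩ := hsep.exists_finite_quotient_forall_notMem
    (fun i : Set.Ioo 0 N => h ^ (i : ℕ))
    fun i hi => Nat.not_dvd_of_pos_of_lt i.2.1 i.2.2 (dvd_of_pow_mem_zpowers_pow hh hi)
  have hdvd : N ∣ orderOf (ρ h) := dvd_orderOf_of_forall_pow_notMem_zpowers_pow hN
    fun i hi hiN => by simpa only [map_pow, MonoidHom.map_zpowers] using hρ ⟨i, hi, hiN⟩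
  obtain ⟨k, hk⟩ := hdvd
  refine ⟨Q, inferInstance, inferInstance, ρ, k, Nat.pos_of_ne_zero ?_, by rw [hk, mul_comm]⟩
  rintro rfl
  exact (orderOf_pos (ρ h)).ne' (by simpa using hk)
end

section
/- Let G be a group, let I be a finite index set, and for each i ∈ I let D_i ≤ H_i be subgroups of G such that D_i has finite index in H_i and D_i is separable in G. Then G contains a finite-index normal subgroup N such that N ∩ H_i ≤ D_i for every i ∈ I; consequently, N ∩ gH_ig⁻¹ ≤ gD_ig⁻¹ for every i ∈ I and every g ∈ G. -/
namespace IsSeparableSubgroup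

variable {G : Type*} [Group G] {D : Subgroup G}

theorem exists_normal_finiteIndex_mem_sup_imp_mem (hs : IsSeparableSubgroup D) (g : G) :
    ∃ K : Subgroup G, K.Normal ∧ K.FiniteIndex ∧ (g ∈ D ⊔ K → g ∈ D) := by
  by_cases hg : g ∈ D
  · exact ⟨⊤, inferInstance, inferInstance, fun _ => hg⟩
  obtain ⟨Q, _, _, φ, hφ⟩ := hs g hg
  refine ⟨φ.ker, inferInstance, Subgroup.finiteIndex_ker φ, fun hmem => absurd ?_ hφ⟩
  rwa [← Subgroup.mem_comap, Subgroup.comap_map_eq]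

theorem exists_normal_finiteIndex_forall_mem_sup_imp_mem (hs : IsSeparableSubgroup D)
    {ι : Type*} [Finite ι] (f : ι → G) :
    ∃ K : Subgroup G, K.Normal ∧ K.FiniteIndex ∧ ∀ i, f i ∈ D ⊔ K → f i ∈ D := by
  choose K hKnormal hKfin hK using fun i => hs.exists_normal_finiteIndex_mem_sup_imp_mem (f i)
  exact ⟨⨅ i, K i, Subgroup.normal_iInf_normal hKnormal, Subgroup.finiteIndex_iInf hKfin,
    fun i hi => hK i (sup_le_sup_left (iInf_le K i) D hi)⟩

theorem exists_normal_finiteIndex_inf_le (hs : IsSeparableSubgroup D) {H : Subgroup G}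
    (hfin : D.relIndex H ≠ 0) :
    ∃ N : Subgroup G, N.Normal ∧ N.FiniteIndex ∧ N ⊓ H ≤ D := by
  have : (D.subgroupOf H).FiniteIndex := ⟨hfin⟩
  obtain ⟨N, hNnormal, hNfin, hN⟩ :=
    hs.exists_normal_finiteIndex_forall_mem_sup_imp_mem fun q : H ⧸ D.subgroupOf H => (q.out : G)
  refine ⟨N, hNnormal, hNfin, fun n ⟨hnN, hnH⟩ => ?_⟩
  obtain ⟨⟨d, hd⟩, hout⟩ := QuotientGroup.mk_out_eq_mul (D.subgroupOf H) ⟨n, hnH⟩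
  rw [Subgroup.mem_subgroupOf] at hd
  have hrep : n * d ∈ D := by
    have hcoset := hN (⟨n, hnH⟩ : H)
    rw [hout] at hcoset
    exact hcoset (Subgroup.mul_mem _ (Subgroup.mem_sup_right hnN) (Subgroup.mem_sup_left hd))
  simpa using D.mul_mem hrep (D.inv_mem hd)

end IsSeparableSubgroup

theorem Subgroup.Normal.inf_map_conj_le {G : Type*} [Group G] {N H D : Subgroup G}
    (hN : N.Normal) (h : N ⊓ H ≤ D) (g : G) :
    N ⊓ H.map (MulAut.conj g).toMonoidHom ≤ D.map (MulAut.conj g).toMonoidHom := by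
  rintro _ ⟨hxN, y, hyH, rfl⟩
  have hyN : y ∈ N := by simpa [mul_assoc] using hN.conj_mem' _ hxN g
  exact ⟨y, h ⟨hyN, hyH⟩, rfl⟩

theorem exists_finiteIndex_normal_subgroup_inf_le_general {G : Type*} [Group G]
    {I : Type*} [Finite I] (H D : I → Subgroup G)
    (hfin : ∀ i, (D i).relIndex (H i) ≠ 0)
    (hsep : ∀ i, IsSeparableSubgroup (D i)) :
    ∃ N : Subgroup G, N.Normal ∧ N.FiniteIndex ∧
      (∀ i, N ⊓ H i ≤ D i) ∧
      (∀ i, ∀ g : G, N ⊓ (H i).map (MulAut.conj g).toMonoidHom ≤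
        (D i).map (MulAut.conj g).toMonoidHom) := by
  choose N hNnormal hNfin hN using fun i => (hsep i).exists_normal_finiteIndex_inf_le (hfin i)
  have hle : ∀ i, (⨅ j, N j) ⊓ H i ≤ D i :=
    fun i => le_trans (inf_le_inf_right _ (iInf_le N i)) (hN i)
  have hnormal := Subgroup.normal_iInf_normal hNnormal
  exact ⟨⨅ i, N i, hnormal, Subgroup.finiteIndex_iInf hNfin, hle,
    fun i => hnormal.inf_map_conj_le (hle i)⟩

/-- Given finitely many subgroups `D i ≤ H i` of `G` with `D i` of finite index in
`H i` and `D i` separable in `G`, there is a finite-index normal subgroup `N` of `G`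
with `N ⊓ H i ≤ D i` for all `i`; consequently `N ⊓ g (H i) g⁻¹ ≤ g (D i) g⁻¹`
for all `i` and all `g ∈ G`. -/
theorem exists_finiteIndex_normal_subgroup_inf_le {G : Type*} [Group G]
    {I : Type*} [Finite I] (H D : I → Subgroup G) (hle : ∀ i, D i ≤ H i)
    (hfin : ∀ i, (D i).relIndex (H i) ≠ 0)
    (hsep : ∀ i, IsSeparableSubgroup (D i)) :
    ∃ N : Subgroup G, N.Normal ∧ N.FiniteIndex ∧
      (∀ i, N ⊓ H i ≤ D i) ∧
      (∀ i, ∀ g : G, N ⊓ (H i).map (MulAut.conj g).toMonoidHom ≤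
        (D i).map (MulAut.conj g).toMonoidHom) :=
  exists_finiteIndex_normal_subgroup_inf_le_general H D hfin hsep
end

section
/- Let F be a free group, let π : F × ℤ → F denote the projection onto the first factor, and let H be a subgroup of F × ℤ. Then H is isomorphic, as a group, to the direct product of its image π(H) under the projection and its intersection H ∩ ({1} × ℤ) with the kernel of π. -/
/-!
The image `π(H)` is a subgroup of a free group, hence free (Nielsen–Schreier), so the surjection
`H → π(H)` has a homomorphic section. Its kernel `H ∩ ({1} × ℤ)` is central, so the semidirect
product decomposition given by the section has trivial action and is a direct product.
-/

namespace GroupExtension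

variable {N E G : Type*} [Group N] [Group E] [Group G] {S : GroupExtension N E G}

theorem conjAct_eq_one_of_commute (h : ∀ n e, Commute (S.inl n) e) : S.conjAct = 1 := by
  ext e n
  apply S.inl_injective
  rw [inl_conjAct_comm, ← (h n e).eq, mul_inv_cancel_right]
  rfl

theorem Splitting.conjAct_eq_one_of_commute (s : S.Splitting)
    (h : ∀ n e, Commute (S.inl n) e) : s.conjAct = 1 := by
  rw [Splitting.conjAct, GroupExtension.conjAct_eq_one_of_commute h, MonoidHom.one_comp]

noncomputable def Splitting.mulEquivProdOfCommute (s : S.Splitting)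
    (h : ∀ n e, Commute (S.inl n) e) : E ≃* G × N :=
  s.semidirectProductMulEquiv.symm.trans <|
    (SemidirectProduct.congr (.refl N) (.refl G) fun g => by
      rw [s.conjAct_eq_one_of_commute h]; rfl).trans <|
    SemidirectProduct.mulEquivProd.trans MulEquiv.prodComm

variable (S) in
theorem nonempty_splitting_of_isFreeGroup [IsFreeGroup G] : Nonempty S.Splitting := by
  let s : G →* E := IsFreeGroup.lift fun a =>
    Function.surjInv S.rightHom_surjective (IsFreeGroup.of a)
  have hs : S.rightHom.comp s = .id G := IsFreeGroup.ext_hom fun a => by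
    simp [s, Function.surjInv_eq S.rightHom_surjective]
  exact ⟨⟨s, fun g => DFunLike.congr_fun hs g⟩⟩

end GroupExtension

namespace MonoidHom

variable {A B : Type*} [Group A] [Group B]

theorem ker_fst_le_center {C : Type*} [CommGroup C] : (fst A C).ker ≤ Subgroup.center (A × C) :=
  fun x hx => Subgroup.mem_center_iff.mpr fun y =>
    (Commute.prod ((show x.1 = 1 from hx) ▸ Commute.one_right y.1) (Commute.all y.2 x.2)).eq

def subgroupMapExtension (f : A →* B) (H : Subgroup A) :
    GroupExtension ↥(H ⊓ f.ker) H (H.map f) where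
  inl := Subgroup.inclusion inf_le_left
  rightHom := f.subgroupMap H
  inl_injective := Subgroup.inclusion_injective _
  range_inl_eq_ker_rightHom := by
    rw [Subgroup.inclusion_range, Subgroup.inf_subgroupOf_left, Subgroup.ker_subgroupMap]
  rightHom_surjective := f.subgroupMap_surjective H

theorem subgroupMapExtension_inl_commute {f : A →* B} (hf : f.ker ≤ Subgroup.center A)
    (H : Subgroup A) (n : ↥(H ⊓ f.ker)) (h : H) :
    Commute ((f.subgroupMapExtension H).inl n) h :=
  Subtype.ext <| Subgroup.mem_center_iff.mp (hf (Subgroup.mem_inf.mp n.2).2) h |>.symm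

end MonoidHom

/-- If `F` is a free group, `π : F × ℤ → F` is the projection onto the first factor, and
`H ≤ F × ℤ`, then `H` is isomorphic to the direct product of its image `π(H)` with its
intersection `H ⊓ ({1} × ℤ)` with the kernel of `π`. -/
theorem subgroup_of_freeGroup_prod_int_iso {α : Type*}
    (H : Subgroup (FreeGroup α × Multiplicative ℤ)) :
    Nonempty
      (↥H ≃* ↥(H.map (MonoidHom.fst (FreeGroup α) (Multiplicative ℤ))) ×
        ↥(H ⊓ (MonoidHom.fst (FreeGroup α) (Multiplicative ℤ)).ker)) := by
  let S := (MonoidHom.fst (FreeGroup α) (Multiplicative ℤ)).subgroupMapExtension H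
  obtain ⟨s⟩ := S.nonempty_splitting_of_isFreeGroup
  exact ⟨s.mulEquivProdOfCommute
    (MonoidHom.subgroupMapExtension_inl_commute MonoidHom.ker_fst_le_center H)⟩
end
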